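/- Let z ∈ ℝ⁴ be space-like, u ∈ ℝ⁴ time-like, ε > 0, and w = z + iεu. Then 1 ≤ |w|/|r(w)| ≤ (|u|/√(u_μu^μ)) · (|z|/r(z)), where |w| denotes the Euclidean norm on ℂ⁴ and |u|, |z| Euclidean norms on ℝ⁴. -/

import Mathlib

open Complex

/-- Minkowski quadratic form `w_μ w^μ` on `ℂ⁴`, metric `diag(1,-1,-1,-1)`. -/
noncomputable def minkC (w : Fin 4 → ℂ) : ℂ :=
  w 0 ^ 2 - w 1 ^ 2 - w 2 ^ 2 - w 3 ^ 2

/-- Minkowski quadratic form `z_μ z^μ` on `ℝ⁴`. -/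
def minkR (z : Fin 4 → ℝ) : ℝ :=
  z 0 ^ 2 - z 1 ^ 2 - z 2 ^ 2 - z 3 ^ 2

/-- `r(w) = √(-w_μ w^μ)` with the principal branch of the square root. -/
noncomputable def rC (w : Fin 4 → ℂ) : ℂ :=
  (-minkC w) ^ ((1 : ℂ) / 2)

/-- Euclidean norm on `ℂ⁴`: `|w| = √(Σ_μ |w^μ|²)`. -/
noncomputable def enormC (w : Fin 4 → ℂ) : ℝ :=
  Real.sqrt (∑ μ : Fin 4, ‖w μ‖ ^ 2)

/-- Euclidean norm on `ℝ⁴`. -/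
noncomputable def enormR (z : Fin 4 → ℝ) : ℝ :=
  Real.sqrt (∑ μ : Fin 4, z μ ^ 2)

/-- For `z` space-like, `u` time-like, `ε > 0`, and `w = z + iεu`:
`1 ≤ |w|/|r(w)| ≤ (|u|/√(u_μu^μ)) · (|z|/r(z))`. -/
theorem enorm_div_rC_bounds (z u : Fin 4 → ℝ) (hz : minkR z < 0) (hu : 0 < minkR u)
    (ε : ℝ) (hε : 0 < ε) :
    (1 : ℝ) ≤ enormC (fun μ => (z μ : ℂ) + (ε : ℂ) * (u μ : ℂ) * Complex.I)
          / ‖rC (fun μ => (z μ : ℂ) + (ε : ℂ) * (u μ : ℂ) * Complex.I)‖ ∧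
      enormC (fun μ => (z μ : ℂ) + (ε : ℂ) * (u μ : ℂ) * Complex.I)
          / ‖rC (fun μ => (z μ : ℂ) + (ε : ℂ) * (u μ : ℂ) * Complex.I)‖
        ≤ (enormR u / Real.sqrt (minkR u)) * (enormR z / Real.sqrt (-minkR z)) := by
  set w : Fin 4 → ℂ := fun μ => (z μ : ℂ) + (ε : ℂ) * (u μ : ℂ) * Complex.I with hw
  set A : ℝ := -minkR z with hA
  set C : ℝ := minkR u with hC
  set S : ℝ := ∑ μ : Fin 4, z μ ^ 2 with hS
  set T : ℝ := ∑ μ : Fin 4, u μ ^ 2 with hT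
  have hApos : 0 < A := by simpa [hA] using hz
  have hCpos : 0 < C := hu
  have hSge : A ≤ S := by
    simp only [hA, hS, minkR, Fin.sum_univ_four]
    nlinarith [sq_nonneg (z 0)]
  have hTge : C ≤ T := by
    simp only [hC, hT, minkR, Fin.sum_univ_four]
    nlinarith [sq_nonneg (u 1), sq_nonneg (u 2), sq_nonneg (u 3)]
  have hSpos : 0 < S := lt_of_lt_of_le hApos hSge
  have hTpos : 0 < T := lt_of_lt_of_le hCpos hTge
  -- norms of components
  have hnorm : ∀ μ, ‖w μ‖ ^ 2 = z μ ^ 2 + ε ^ 2 * u μ ^ 2 := by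
    intro μ
    simp only [hw, Complex.sq_norm, Complex.normSq_apply, Complex.add_re,
      Complex.add_im, Complex.mul_re, Complex.mul_im, Complex.ofReal_re, Complex.ofReal_im,
      Complex.I_re, Complex.I_im]
    ring
  have hsum : ∑ μ : Fin 4, ‖w μ‖ ^ 2 = S + ε ^ 2 * T := by
    simp only [hnorm, hS, hT, Fin.sum_univ_four]
    ring
  have hEpos : 0 < S + ε ^ 2 * T := by positivity
  have hE : enormC w = Real.sqrt (S + ε ^ 2 * T) := by rw [enormC, hsum]
  -- the complex number a = -minkC w
  set a : ℂ := -minkC w with ha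
  have hare : a.re = A + ε ^ 2 * C := by
    simp only [ha, hA, hC, minkC, minkR, hw, Complex.neg_re, Complex.sub_re, pow_two,
      Complex.mul_re, Complex.mul_im, Complex.add_re, Complex.add_im, Complex.ofReal_re,
      Complex.ofReal_im, Complex.I_re, Complex.I_im]
    ring
  have harepos : 0 < a.re := by rw [hare]; positivity
  have ha0 : a ≠ 0 := by
    intro h
    rw [h] at harepos
    simp at harepos
  have habspos : 0 < ‖a‖ := norm_pos_iff.mpr ha0
  -- norm of rC w
  have hN : ‖rC w‖ = Real.sqrt (‖a‖) := by
    rw [rC, ← ha, Complex.norm_cpow_of_ne_zero ha0]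
    simp [Real.sqrt_eq_rpow]
  have hNpos : 0 < ‖rC w‖ := by rw [hN]; exact Real.sqrt_pos.mpr habspos
  -- triangle inequality bound: |a| ≤ S + ε²T
  have habs_le : ‖a‖ ≤ S + ε ^ 2 * T := by
    have h1 : ‖a‖ ≤ ∑ μ : Fin 4, ‖w μ‖ ^ 2 := by
      rw [Fin.sum_univ_four]
      have : ‖a‖ = ‖w 0 ^ 2 - w 1 ^ 2 - w 2 ^ 2 - w 3 ^ 2‖ := by
        rw [ha, norm_neg, minkC]
      rw [this]
      calc ‖w 0 ^ 2 - w 1 ^ 2 - w 2 ^ 2 - w 3 ^ 2‖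
          ≤ ‖w 0 ^ 2 - w 1 ^ 2 - w 2 ^ 2‖ + ‖w 3 ^ 2‖ := norm_sub_le _ _
        _ ≤ ‖w 0 ^ 2 - w 1 ^ 2‖ + ‖w 2 ^ 2‖ + ‖w 3 ^ 2‖ := by
            gcongr; exact norm_sub_le _ _
        _ ≤ ‖w 0 ^ 2‖ + ‖w 1 ^ 2‖ + ‖w 2 ^ 2‖ + ‖w 3 ^ 2‖ := by
            gcongr; exact norm_sub_le _ _
        _ = ‖w 0‖ ^ 2 + ‖w 1‖ ^ 2 + ‖w 2‖ ^ 2 + ‖w 3‖ ^ 2 := by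
            simp [norm_pow]
    rwa [hsum] at h1
  -- lower bound for |a|
  have habs_ge : A + ε ^ 2 * C ≤ ‖a‖ := by
    rw [← hare]; exact Complex.re_le_norm a
  constructor
  · rw [le_div_iff₀ hNpos, one_mul, hN, hE]
    exact Real.sqrt_le_sqrt habs_le
  · rw [div_le_iff₀ hNpos, hE, hN]
    have hK : (enormR u / Real.sqrt C) * (enormR z / Real.sqrt A) * Real.sqrt (‖a‖)
        = Real.sqrt ((T / C) * (S / A) * ‖a‖) := by
      rw [enormR, enormR, ← hS, ← hT, ← Real.sqrt_div hTpos.le, ← Real.sqrt_div hSpos.le,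
        ← Real.sqrt_mul (by positivity), ← Real.sqrt_mul (by positivity)]
    rw [hK]
    apply Real.sqrt_le_sqrt
    have hstep : S + ε ^ 2 * T ≤ (T / C) * (S / A) * (A + ε ^ 2 * C) := by
      rw [div_mul_div_comm, div_mul_eq_mul_div, le_div_iff₀ (by positivity)]
      nlinarith [mul_nonneg (mul_nonneg (sub_nonneg.mpr hTge) hSpos.le) hApos.le,
        mul_nonneg (mul_nonneg (sub_nonneg.mpr hSge) hTpos.le) hCpos.le, sq_nonneg ε]
    calc S + ε ^ 2 * T ≤ (T / C) * (S / A) * (A + ε ^ 2 * C) := hstep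
      _ ≤ (T / C) * (S / A) * ‖a‖ :=
          mul_le_mul_of_nonneg_left habs_ge (by positivity)
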